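/- Let S ⊂ ℚ_p be an open set with 0 < μ(S) < ∞ that is a disjoint union of closed balls B(x_k, p^{-n_k}), k ∈ ℕ (or finitely many), with n_k ∈ ℤ. Suppose the multiplicities m_l = #{k : n_k = l} are uniformly bounded by M < ∞. Then for every integer n ≥ min_k n_k, the normalized average p^n · ∫_{B(0,p^{-n})} μ(S \ (S + y)) dμ(y) ≤ M·p³/(p² − 1) · p^{-n}. -/

import Mathlib

open MeasureTheory
open scoped ENNReal NNReal

noncomputable instance padicMS (p : ℕ) [Fact p.Prime] : MeasurableSpace ℚ_[p] := borel _
instance padicBS (p : ℕ) [Fact p.Prime] : BorelSpace ℚ_[p] := ⟨rfl⟩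

/-- The Haar measure on `ℚ_[p]`, normalized so that `ℤ_[p]` (the closed unit ball) has measure 1. -/
noncomputable def padicHaar (p : ℕ) [Fact p.Prime] : Measure ℚ_[p] :=
  Measure.addHaarMeasure
    ⟨⟨Metric.closedBall 0 1, isCompact_closedBall 0 1⟩,
      ⟨0, Metric.ball_subset_interior_closedBall (Metric.mem_ball_self one_pos)⟩⟩

variable (p : ℕ) [Fact p.Prime]

instance padicHaar_inv : (padicHaar p).IsAddLeftInvariant := by unfold padicHaar; infer_instance

example : MeasurableAdd ℚ_[p] := inferInstance

lemma padicHaar_ball_translate (c : ℚ_[p]) (r : ℝ) :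
    padicHaar p (Metric.closedBall c r) = padicHaar p (Metric.closedBall 0 r) := by
  have h := measure_preimage_add (padicHaar p) c (Metric.closedBall c r)
  rw [← h]
  congr 1
  ext z
  simp [Metric.mem_closedBall, dist_eq_norm]

lemma padicHaar_ball_step (m : ℤ) :
    padicHaar p (Metric.closedBall 0 ((p : ℝ) ^ (-m))) =
      p * padicHaar p (Metric.closedBall 0 ((p : ℝ) ^ (-(m + 1)))) := by
  have hp : p.Prime := Fact.out
  have hp0R : (0:ℝ) < p := by exact_mod_cast hp.pos
  have hp1R : (1:ℝ) < p := by exact_mod_cast hp.one_lt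
  have hp0Q : (p : ℚ_[p]) ≠ 0 := Nat.cast_ne_zero.mpr hp.ne_zero
  have hcover : Metric.closedBall (0:ℚ_[p]) ((p : ℝ) ^ (-m)) =
      ⋃ j ∈ Finset.range p, Metric.closedBall ((j : ℚ_[p]) * (p : ℚ_[p]) ^ m) ((p : ℝ) ^ (-(m+1))) := by
    ext z
    simp only [Metric.mem_closedBall, Set.mem_iUnion, Finset.mem_range, dist_eq_norm, sub_zero,
      exists_prop]
    constructor
    · intro hz
      set w : ℚ_[p] := z * (p : ℚ_[p]) ^ (-m) with hwdef
      have hw : ‖w‖ ≤ 1 := by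
        rw [hwdef, norm_mul, Padic.norm_p_zpow, neg_neg]
        calc ‖z‖ * (p:ℝ) ^ m ≤ (p:ℝ) ^ (-m) * (p:ℝ) ^ m :=
              mul_le_mul_of_nonneg_right hz (zpow_nonneg hp0R.le m)
          _ = 1 := by rw [← zpow_add₀ hp0R.ne' (-m) m]; simp
      set W : ℤ_[p] := ⟨w, hw⟩ with hWdef
      refine ⟨W.appr 1, by simpa using W.appr_lt 1, ?_⟩
      have hWj : ‖W - (W.appr 1 : ℤ_[p])‖ ≤ (p:ℝ) ^ (-(1:ℕ):ℤ) :=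
        ((W - (W.appr 1 : ℤ_[p])).norm_le_pow_iff_mem_span_pow 1).mpr (W.appr_spec 1)
      have hwj : ‖w - (W.appr 1 : ℚ_[p])‖ ≤ (p:ℝ) ^ (-1:ℤ) := by
        have : ((W - (W.appr 1 : ℤ_[p]) : ℤ_[p]) : ℚ_[p]) = w - (W.appr 1 : ℚ_[p]) := by
          exact PadicInt.coe_sub _ _
        rw [← this]
        have h' : ‖W - (W.appr 1 : ℤ_[p])‖ ≤ (p:ℝ)^(-1:ℤ) := by simpa using hWj
        exact h'
      have hwz : w * (p : ℚ_[p]) ^ m = z := by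
        rw [hwdef, mul_assoc, ← zpow_add₀ hp0Q (-m) m]; simp
      have : z - (W.appr 1 : ℚ_[p]) * (p:ℚ_[p]) ^ m = (w - (W.appr 1 : ℚ_[p])) * (p:ℚ_[p]) ^ m := by
        rw [sub_mul, hwz]
      rw [this, norm_mul, Padic.norm_p_zpow]
      calc ‖w - (W.appr 1 : ℚ_[p])‖ * (p:ℝ) ^ (-m) ≤ (p:ℝ) ^ (-1:ℤ) * (p:ℝ) ^ (-m) :=
            mul_le_mul_of_nonneg_right hwj (zpow_nonneg hp0R.le _)
        _ = (p:ℝ) ^ (-(m+1)) := by rw [← zpow_add₀ hp0R.ne']; ring_nf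
    · rintro ⟨j, hjp, hj⟩
      have hjn : ‖(j : ℚ_[p])‖ ≤ 1 := by
        have := Padic.norm_int_le_one (p := p) j
        push_cast at this ⊢
        exact this
      have h1 : ‖(j : ℚ_[p]) * (p:ℚ_[p]) ^ m‖ ≤ (p:ℝ) ^ (-m) := by
        rw [norm_mul, Padic.norm_p_zpow]
        calc ‖(j:ℚ_[p])‖ * (p:ℝ)^(-m) ≤ 1 * (p:ℝ)^(-m) :=
              mul_le_mul_of_nonneg_right hjn (zpow_nonneg hp0R.le _)
          _ = (p:ℝ)^(-m) := one_mul _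
      have h2 : (p:ℝ) ^ (-(m+1)) ≤ (p:ℝ) ^ (-m) := zpow_le_zpow_right₀ hp1R.le (by omega)
      calc ‖z‖ = ‖(z - (j : ℚ_[p]) * (p:ℚ_[p])^m) + (j : ℚ_[p]) * (p:ℚ_[p])^m‖ := by ring_nf
        _ ≤ max ‖z - (j : ℚ_[p]) * (p:ℚ_[p])^m‖ ‖(j : ℚ_[p]) * (p:ℚ_[p])^m‖ :=
            Padic.nonarchimedean _ _
        _ ≤ (p:ℝ) ^ (-m) := max_le (hj.trans h2) h1
  have hdisjoint : (↑(Finset.range p) : Set ℕ).PairwiseDisjoint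
      (fun j => Metric.closedBall ((j : ℚ_[p]) * (p : ℚ_[p]) ^ m) ((p : ℝ) ^ (-(m+1)))) := by
    intro j hj j' hj' hne
    simp only [Finset.coe_range, Set.mem_Iio] at hj hj'
    refine Set.disjoint_left.mpr fun z hz hz' => ?_
    simp only [Metric.mem_closedBall, dist_eq_norm] at hz hz'
    have hdvd : ¬ ((p:ℤ) ∣ (j:ℤ) - j') := by
      intro h
      have : ((j:ℤ) - j') = 0 :=
        Int.eq_zero_of_dvd_of_natAbs_lt_natAbs h (by simp; omega)
      omega
    have hnorm1 : ‖(((j:ℤ) - j' : ℤ) : ℚ_[p])‖ = 1 := by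
      refine le_antisymm (Padic.norm_int_le_one _) ?_
      by_contra hlt
      push_neg at hlt
      exact hdvd ((Padic.norm_intCast_lt_one_iff).mp hlt)
    have hkey : ‖(j : ℚ_[p]) * (p:ℚ_[p])^m - (j' : ℚ_[p]) * (p:ℚ_[p])^m‖ = (p:ℝ)^(-m) := by
      have : (j : ℚ_[p]) * (p:ℚ_[p])^m - (j' : ℚ_[p]) * (p:ℚ_[p])^m
          = (((j:ℤ) - j' : ℤ) : ℚ_[p]) * (p:ℚ_[p])^m := by push_cast; ring
      rw [this, norm_mul, hnorm1, one_mul, Padic.norm_p_zpow]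
    have hle : ‖(j : ℚ_[p]) * (p:ℚ_[p])^m - (j' : ℚ_[p]) * (p:ℚ_[p])^m‖ ≤ (p:ℝ)^(-(m+1)) := by
      have : (j : ℚ_[p]) * (p:ℚ_[p])^m - (j' : ℚ_[p]) * (p:ℚ_[p])^m
          = ((j : ℚ_[p]) * (p:ℚ_[p])^m - z) + (z - (j' : ℚ_[p]) * (p:ℚ_[p])^m) := by ring
      rw [this]
      refine (Padic.nonarchimedean _ _).trans (max_le ?_ hz')
      rw [norm_sub_rev]; exact hz
    rw [hkey] at hle
    have : (p:ℝ)^(-(m+1)) < (p:ℝ)^(-m) := zpow_lt_zpow_right₀ hp1R (by omega)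
    linarith
  rw [hcover, measure_biUnion_finset hdisjoint (fun j _ => measurableSet_closedBall)]
  have : ∀ j ∈ Finset.range p,
      padicHaar p (Metric.closedBall ((j : ℚ_[p]) * (p : ℚ_[p]) ^ m) ((p : ℝ) ^ (-(m+1))))
        = padicHaar p (Metric.closedBall 0 ((p : ℝ) ^ (-(m+1)))) :=
    fun j _ => padicHaar_ball_translate p _ _
  rw [Finset.sum_congr rfl this, Finset.sum_const, Finset.card_range, nsmul_eq_mul]

lemma padicHaar_ball_zero (m : ℤ) :
    padicHaar p (Metric.closedBall 0 ((p : ℝ) ^ (-m))) = (p : ℝ≥0∞) ^ (-m) := by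
  have hp : p.Prime := Fact.out
  have hq0 : (p : ℝ≥0∞) ≠ 0 := Nat.cast_ne_zero.mpr hp.ne_zero
  have hqt : (p : ℝ≥0∞) ≠ ⊤ := ENNReal.natCast_ne_top p
  induction m using Int.induction_on with
  | zero => simp; exact Measure.addHaarMeasure_self (K₀ := ⟨⟨Metric.closedBall 0 1, isCompact_closedBall 0 1⟩,
      ⟨0, Metric.ball_subset_interior_closedBall (Metric.mem_ball_self one_pos)⟩⟩)
  | succ k ih =>
    have hstep := padicHaar_ball_step p k
    rw [ih] at hstep
    have hid : (p:ℝ≥0∞) ^ (-(k:ℤ)) = p * (p:ℝ≥0∞) ^ (-((k:ℤ)+1)) := by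
      rw [show (-(k:ℤ)) = 1 + -((k:ℤ)+1) by ring, ENNReal.zpow_add hq0 hqt, zpow_one]
    exact ((ENNReal.mul_right_inj hq0 hqt).mp (hid ▸ hstep)).symm
  | pred k ih =>
    have hstep := padicHaar_ball_step p (-(k:ℤ)-1)
    have he : (-(k:ℤ)-1) + 1 = -(k:ℤ) := by ring
    rw [he, ih] at hstep
    rw [hstep, show (-(-(k:ℤ)-1)) = 1 + -(-(k:ℤ)) by ring, ENNReal.zpow_add hq0 hqt, zpow_one]

lemma padicHaar_ball (c : ℚ_[p]) (m : ℤ) :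
    padicHaar p (Metric.closedBall c ((p : ℝ) ^ (-m))) = (p : ℝ≥0∞) ^ (-m) := by
  rw [padicHaar_ball_translate, padicHaar_ball_zero]

lemma tsum_const_le_of_encard_le {ι : Type*} {t : Set ι} {M : ℕ} (h : t.encard ≤ (M : ℕ∞))
    (c : ℝ≥0∞) : ∑' _ : t, c ≤ (M : ℝ≥0∞) * c := by
  obtain ⟨hfin, n0, hcard, hn0⟩ := Set.encard_le_coe_iff.mp h
  haveI := hfin.fintype
  rw [tsum_fintype, Finset.sum_const, Finset.card_univ, nsmul_eq_mul]
  refine mul_le_mul_left ?_ c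
  have hc : ((Fintype.card t : ℕ) : ℕ∞) = t.encard := by
    rw [Set.encard_eq_coe_toFinset_card t, Set.toFinset_card]
  rw [hcard] at hc
  have h2 : Fintype.card t = n0 := by exact_mod_cast hc
  exact_mod_cast h2 ▸ Nat.cast_le.mpr hn0


/-- If the open set `S` is a countable disjoint union of closed balls `B(x_k, p^{-n_k})`
with multiplicities `m_l = #{k : n_k = l}` uniformly bounded by `M`, then for every
`n ≥ min_k n_k`, the normalized average
`p^n ∫_{B(0,p^{-n})} μ(S \ (S+y)) dμ(y) ≤ M·p³/(p²-1) · p^{-n}`. -/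
theorem stmt13 (p : ℕ) [Fact p.Prime] (ι : Type*) [Countable ι]
    (x : ι → ℚ_[p]) (nk : ι → ℤ) (S : Set ℚ_[p]) (hS : IsOpen S)
    (h0 : 0 < padicHaar p S) (hfin : padicHaar p S < ⊤)
    (hdecomp : S = ⋃ k, Metric.closedBall (x k) ((p : ℝ) ^ (-nk k)))
    (hdisj : Pairwise (Function.onFun Disjoint fun k => Metric.closedBall (x k) ((p : ℝ) ^ (-nk k))))
    (M : ℕ) (hM : ∀ l : ℤ, {k | nk k = l}.encard ≤ (M : ℕ∞))
    (n : ℤ) (hn : ∃ k, nk k ≤ n) :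
    (p : ℝ≥0∞) ^ n *
        ∫⁻ y in Metric.closedBall (0 : ℚ_[p]) ((p : ℝ) ^ (-n)),
          padicHaar p (S \ {z : ℚ_[p] | z - y ∈ S}) ∂(padicHaar p)
      ≤ (M : ℝ≥0∞) * (p : ℝ≥0∞) ^ (3 : ℕ) / ((p : ℝ≥0∞) ^ (2 : ℕ) - 1) * (p : ℝ≥0∞) ^ (-n) := by
  have hp : p.Prime := Fact.out
  have hp1R : (1:ℝ) < p := by exact_mod_cast hp.one_lt
  have hq0 : (p:ℝ≥0∞) ≠ 0 := Nat.cast_ne_zero.mpr hp.ne_zero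
  have hqt : (p:ℝ≥0∞) ≠ ⊤ := ENNReal.natCast_ne_top p
  have h2q : (2:ℝ≥0∞) ≤ p := by exact_mod_cast hp.two_le
  have h1q : (1:ℝ≥0∞) < p := by exact_mod_cast hp.one_lt
  -- geometric sum bound
  have hinv1 : ((1:ℝ≥0∞) - (p:ℝ≥0∞)⁻¹)⁻¹ ≤ p := by
    have h1 : (p:ℝ≥0∞)⁻¹ ≤ 1 - (p:ℝ≥0∞)⁻¹ := by
      refine ENNReal.le_sub_of_add_le_left (by simp [hq0]) ?_
      calc (p:ℝ≥0∞)⁻¹ + (p:ℝ≥0∞)⁻¹ ≤ 2⁻¹ + 2⁻¹ :=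
            add_le_add (ENNReal.inv_le_inv.mpr h2q) (ENNReal.inv_le_inv.mpr h2q)
        _ = 1 := ENNReal.inv_two_add_inv_two
    calc ((1:ℝ≥0∞) - (p:ℝ≥0∞)⁻¹)⁻¹ ≤ ((p:ℝ≥0∞)⁻¹)⁻¹ := ENNReal.inv_le_inv.mpr h1
      _ = p := inv_inv _
  have hgeo : ∀ r : ℝ≥0∞, r ≤ (p:ℝ≥0∞)⁻¹ → ∑' j : ℕ, r ^ j ≤ p := by
    intro r hr
    rw [ENNReal.tsum_geometric]
    exact (ENNReal.inv_le_inv.mpr (tsub_le_tsub_left hr 1)).trans hinv1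
  have hsplit : ∀ (a : ℤ) (i : ℕ),
      (p:ℝ≥0∞) ^ (-(a + (i:ℤ))) = (p:ℝ≥0∞) ^ (-a) * ((p:ℝ≥0∞)⁻¹) ^ i := by
    intro a i
    rw [neg_add, ENNReal.zpow_add hq0 hqt]
    congr 1
    rw [ENNReal.zpow_neg, zpow_natCast, ENNReal.inv_pow]
  have hmul1 : ∀ a : ℤ, (p:ℝ≥0∞) ^ (-(a+1)) * p = (p:ℝ≥0∞) ^ (-a) := by
    intro a
    rw [show (-a : ℤ) = (-(a+1)) + 1 by ring, ENNReal.zpow_add hq0 hqt, zpow_one]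
  -- pointwise bound
  have key : ∀ (i : ℕ) (y : ℚ_[p]), ‖y‖ = (p:ℝ) ^ (-(n + (i:ℤ))) →
      padicHaar p (S \ {z : ℚ_[p] | z - y ∈ S}) ≤ (M:ℝ≥0∞) * (p:ℝ≥0∞) ^ (-(n + (i:ℤ))) := by
    intro i y hy
    have hsub : S \ {z : ℚ_[p] | z - y ∈ S} ⊆
        ⋃ j : ℕ, ⋃ k ∈ {k : ι | nk k = n + i + 1 + j},
          Metric.closedBall (x k) ((p:ℝ) ^ (-nk k)) := by
      rintro z ⟨hzS, hzT⟩
      have hzS' := hzS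
      rw [hdecomp] at hzS'
      obtain ⟨k, hk⟩ := Set.mem_iUnion.mp hzS'
      have hnk : n + i + 1 ≤ nk k := by
        by_contra hlt
        push_neg at hlt
        apply hzT
        show z - y ∈ S
        rw [hdecomp]
        refine Set.mem_iUnion.mpr ⟨k, ?_⟩
        simp only [Metric.mem_closedBall, dist_eq_norm] at hk ⊢
        have hyk : ‖y‖ ≤ (p:ℝ) ^ (-nk k) := by
          rw [hy]
          exact zpow_le_zpow_right₀ hp1R.le (by omega)
        calc ‖z - y - x k‖ = ‖(z - x k) + (-y)‖ := by ring_nf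
          _ ≤ max ‖z - x k‖ ‖-y‖ := Padic.nonarchimedean _ _
          _ ≤ (p:ℝ) ^ (-nk k) := max_le hk (by rw [norm_neg]; exact hyk)
      refine Set.mem_iUnion.mpr ⟨(nk k - (n + i + 1)).toNat, Set.mem_biUnion ?_ hk⟩
      show nk k = n + i + 1 + ((nk k - (n + i + 1)).toNat : ℤ)
      omega
    calc padicHaar p (S \ {z : ℚ_[p] | z - y ∈ S})
        ≤ padicHaar p (⋃ j : ℕ, ⋃ k ∈ {k : ι | nk k = n + i + 1 + j},
            Metric.closedBall (x k) ((p:ℝ) ^ (-nk k))) := measure_mono hsub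
      _ ≤ ∑' j : ℕ, padicHaar p (⋃ k ∈ {k : ι | nk k = n + i + 1 + j},
            Metric.closedBall (x k) ((p:ℝ) ^ (-nk k))) := measure_iUnion_le _
      _ ≤ ∑' j : ℕ, (M:ℝ≥0∞) * (p:ℝ≥0∞) ^ (-(n + i + 1 + (j:ℤ))) := by
          refine ENNReal.tsum_le_tsum fun j => ?_
          refine (measure_biUnion_le (padicHaar p) (Set.to_countable _) _).trans ?_
          have hterm : ∀ k : {k : ι | nk k = n + i + 1 + j},
              padicHaar p (Metric.closedBall (x (k:ι)) ((p:ℝ) ^ (-nk (k:ι))))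
                = (p:ℝ≥0∞) ^ (-(n + i + 1 + (j:ℤ))) := by
            intro k
            have hk2 : nk (k:ι) = n + i + 1 + (j:ℤ) := k.2
            rw [padicHaar_ball p (x (k:ι)) (nk (k:ι)), hk2]
          rw [tsum_congr hterm]
          exact tsum_const_le_of_encard_le (hM _) _
      _ = (M:ℝ≥0∞) * (p:ℝ≥0∞) ^ (-(n + i + 1 : ℤ)) * ∑' j : ℕ, ((p:ℝ≥0∞)⁻¹) ^ j := by
          rw [← ENNReal.tsum_mul_left]
          refine tsum_congr fun j => ?_
          rw [show (n + (i:ℤ) + 1 + (j:ℤ)) = (n + (i:ℤ) + 1) + (j:ℤ) by ring,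
            hsplit (n + i + 1) j]
          ring
      _ ≤ (M:ℝ≥0∞) * (p:ℝ≥0∞) ^ (-(n + i + 1 : ℤ)) * p :=
          mul_le_mul_right (hgeo _ le_rfl) _
      _ = (M:ℝ≥0∞) * (p:ℝ≥0∞) ^ (-(n + (i:ℤ))) := by
          rw [mul_assoc, hmul1 (n + i)]
  -- shells
  have hcov : Metric.closedBall (0:ℚ_[p]) ((p:ℝ) ^ (-n)) ⊆
      {0} ∪ ⋃ i : ℕ, {y : ℚ_[p] | ‖y‖ = (p:ℝ) ^ (-(n + (i:ℤ)))} := by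
    intro y hy
    rcases eq_or_ne y 0 with h | h
    · exact Or.inl h
    · refine Or.inr (Set.mem_iUnion.mpr ?_)
      have hv := Padic.norm_eq_zpow_neg_valuation h
      have hyn : ‖y‖ ≤ (p:ℝ) ^ (-n) := by
        simpa [dist_eq_norm] using hy
      have hvn : n ≤ y.valuation := by
        rw [hv] at hyn
        have := (zpow_le_zpow_iff_right₀ hp1R).mp hyn
        omega
      refine ⟨(y.valuation - n).toNat, ?_⟩
      show ‖y‖ = (p:ℝ) ^ (-(n + ((y.valuation - n).toNat : ℤ)))
      rw [hv]
      congr 1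
      omega
  -- the integral bound
  have hint : (∫⁻ y in Metric.closedBall (0 : ℚ_[p]) ((p : ℝ) ^ (-n)),
          padicHaar p (S \ {z : ℚ_[p] | z - y ∈ S}) ∂(padicHaar p))
      ≤ ∑' i : ℕ, (M:ℝ≥0∞) * (p:ℝ≥0∞) ^ (-(n + (i:ℤ))) * (p:ℝ≥0∞) ^ (-(n + (i:ℤ))) := by
    calc (∫⁻ y in Metric.closedBall (0 : ℚ_[p]) ((p : ℝ) ^ (-n)),
          padicHaar p (S \ {z : ℚ_[p] | z - y ∈ S}) ∂(padicHaar p))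
        ≤ ∫⁻ y in {0} ∪ ⋃ i : ℕ, {y : ℚ_[p] | ‖y‖ = (p:ℝ) ^ (-(n + (i:ℤ)))},
            padicHaar p (S \ {z : ℚ_[p] | z - y ∈ S}) ∂(padicHaar p) :=
          lintegral_mono_set hcov
      _ ≤ (∫⁻ y in {(0:ℚ_[p])}, padicHaar p (S \ {z : ℚ_[p] | z - y ∈ S}) ∂(padicHaar p))
            + ∫⁻ y in ⋃ i : ℕ, {y : ℚ_[p] | ‖y‖ = (p:ℝ) ^ (-(n + (i:ℤ)))},
                padicHaar p (S \ {z : ℚ_[p] | z - y ∈ S}) ∂(padicHaar p) :=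
          lintegral_union_le _ _ _
      _ ≤ 0 + ∑' i : ℕ, ∫⁻ y in {y : ℚ_[p] | ‖y‖ = (p:ℝ) ^ (-(n + (i:ℤ)))},
            padicHaar p (S \ {z : ℚ_[p] | z - y ∈ S}) ∂(padicHaar p) := by
          refine add_le_add ?_ (lintegral_iUnion_le _ _)
          rw [lintegral_singleton]
          simp only [sub_zero, Set.setOf_mem_eq, Set.diff_self, measure_empty, zero_mul, le_refl]
      _ = ∑' i : ℕ, ∫⁻ y in {y : ℚ_[p] | ‖y‖ = (p:ℝ) ^ (-(n + (i:ℤ)))},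
            padicHaar p (S \ {z : ℚ_[p] | z - y ∈ S}) ∂(padicHaar p) := zero_add _
      _ ≤ ∑' i : ℕ, (M:ℝ≥0∞) * (p:ℝ≥0∞) ^ (-(n + (i:ℤ))) * (p:ℝ≥0∞) ^ (-(n + (i:ℤ))) := by
          refine ENNReal.tsum_le_tsum fun i => ?_
          calc (∫⁻ y in {y : ℚ_[p] | ‖y‖ = (p:ℝ) ^ (-(n + (i:ℤ)))},
                padicHaar p (S \ {z : ℚ_[p] | z - y ∈ S}) ∂(padicHaar p))
              ≤ ∫⁻ _ in {y : ℚ_[p] | ‖y‖ = (p:ℝ) ^ (-(n + (i:ℤ)))},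
                  ((M:ℝ≥0∞) * (p:ℝ≥0∞) ^ (-(n + (i:ℤ)))) ∂(padicHaar p) :=
                setLIntegral_mono measurable_const (fun y hy => key i y hy)
            _ = (M:ℝ≥0∞) * (p:ℝ≥0∞) ^ (-(n + (i:ℤ)))
                  * padicHaar p {y : ℚ_[p] | ‖y‖ = (p:ℝ) ^ (-(n + (i:ℤ)))} :=
                setLIntegral_const _ _
            _ ≤ (M:ℝ≥0∞) * (p:ℝ≥0∞) ^ (-(n + (i:ℤ)))
                  * padicHaar p (Metric.closedBall 0 ((p:ℝ) ^ (-(n + (i:ℤ))))) := by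
                refine mul_le_mul_right (measure_mono fun y hy => ?_) _
                rw [Metric.mem_closedBall, dist_zero_right]
                exact le_of_eq hy
            _ = (M:ℝ≥0∞) * (p:ℝ≥0∞) ^ (-(n + (i:ℤ))) * (p:ℝ≥0∞) ^ (-(n + (i:ℤ))) := by
                rw [padicHaar_ball_zero]
  -- sum the series
  have hsum : ∑' i : ℕ, (M:ℝ≥0∞) * (p:ℝ≥0∞) ^ (-(n + (i:ℤ))) * (p:ℝ≥0∞) ^ (-(n + (i:ℤ)))
      ≤ (M:ℝ≥0∞) * (p:ℝ≥0∞) ^ (-n) * (p:ℝ≥0∞) ^ (-n) * p := by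
    have hterm : ∀ i : ℕ, (M:ℝ≥0∞) * (p:ℝ≥0∞) ^ (-(n + (i:ℤ))) * (p:ℝ≥0∞) ^ (-(n + (i:ℤ)))
        = ((M:ℝ≥0∞) * (p:ℝ≥0∞) ^ (-n) * (p:ℝ≥0∞) ^ (-n)) * ((p:ℝ≥0∞)⁻¹ * (p:ℝ≥0∞)⁻¹) ^ i := by
      intro i
      rw [hsplit n i, mul_pow]
      ring
    rw [tsum_congr hterm, ENNReal.tsum_mul_left]
    refine mul_le_mul_right (hgeo _ ?_) _
    have hle1 : (p:ℝ≥0∞)⁻¹ ≤ 1 := ENNReal.inv_le_one.mpr h1q.le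
    calc (p:ℝ≥0∞)⁻¹ * (p:ℝ≥0∞)⁻¹ ≤ 1 * (p:ℝ≥0∞)⁻¹ := mul_le_mul_left hle1 _
      _ = (p:ℝ≥0∞)⁻¹ := one_mul _
  -- final constants
  have hq2ne : (p:ℝ≥0∞) ^ (2:ℕ) - 1 ≠ 0 := by
    rw [Ne, tsub_eq_zero_iff_le]
    exact not_le.mpr (h1q.trans_le (le_self_pow₀ h1q.le two_ne_zero))
  have hq2t : (p:ℝ≥0∞) ^ (2:ℕ) - 1 ≠ ⊤ :=
    ne_top_of_le_ne_top (ENNReal.pow_ne_top hqt) tsub_le_self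
  have hqle : (p:ℝ≥0∞) ≤ (p:ℝ≥0∞) ^ (3:ℕ) / ((p:ℝ≥0∞) ^ (2:ℕ) - 1) := by
    rw [ENNReal.le_div_iff_mul_le (Or.inl hq2ne) (Or.inl hq2t)]
    calc (p:ℝ≥0∞) * ((p:ℝ≥0∞) ^ (2:ℕ) - 1) ≤ (p:ℝ≥0∞) * (p:ℝ≥0∞) ^ (2:ℕ) :=
          mul_le_mul_right tsub_le_self _
      _ = (p:ℝ≥0∞) ^ (3:ℕ) := by ring
  have hone : (p:ℝ≥0∞) ^ n * (p:ℝ≥0∞) ^ (-n) = 1 := by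
    rw [← ENNReal.zpow_add hq0 hqt]
    simp
  calc (p : ℝ≥0∞) ^ n *
        ∫⁻ y in Metric.closedBall (0 : ℚ_[p]) ((p : ℝ) ^ (-n)),
          padicHaar p (S \ {z : ℚ_[p] | z - y ∈ S}) ∂(padicHaar p)
      ≤ (p:ℝ≥0∞) ^ n * ((M:ℝ≥0∞) * (p:ℝ≥0∞) ^ (-n) * (p:ℝ≥0∞) ^ (-n) * p) :=
        mul_le_mul_right (hint.trans hsum) _
    _ = (M:ℝ≥0∞) * (p:ℝ≥0∞) * (p:ℝ≥0∞) ^ (-n) := by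
        calc (p:ℝ≥0∞) ^ n * ((M:ℝ≥0∞) * (p:ℝ≥0∞) ^ (-n) * (p:ℝ≥0∞) ^ (-n) * p)
            = ((p:ℝ≥0∞) ^ n * (p:ℝ≥0∞) ^ (-n)) * ((M:ℝ≥0∞) * (p:ℝ≥0∞) * (p:ℝ≥0∞) ^ (-n)) := by
              ring
          _ = (M:ℝ≥0∞) * (p:ℝ≥0∞) * (p:ℝ≥0∞) ^ (-n) := by rw [hone, one_mul]
    _ ≤ (M:ℝ≥0∞) * ((p:ℝ≥0∞) ^ (3:ℕ) / ((p:ℝ≥0∞) ^ (2:ℕ) - 1)) * (p:ℝ≥0∞) ^ (-n) :=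
        mul_le_mul_left (mul_le_mul_right hqle _) _
    _ = (M : ℝ≥0∞) * (p : ℝ≥0∞) ^ (3 : ℕ) / ((p : ℝ≥0∞) ^ (2 : ℕ) - 1) * (p : ℝ≥0∞) ^ (-n) := by
        rw [mul_div_assoc]
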